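/- arXiv:1503.05757 — 12 statements merged into one kernel-verified Lean document; each statement's English description precedes it below -/
import Mathlib

section
/- Assume k₁,k₂,k₃,k₄ are all positive (or all negative) and k₁k₃ = k₂k₄. Then every point of the open segment R = {(k₃z/k₄, (k₄ − (k₃+k₄)z)/(k₁+k₄), z) : 0 < z < k₄/(k₃+k₄)} lies in the interior of the simplex T (i.e. has x > 0, y > 0, z > 0, x+y+z < 1) and is a singular point of the system ẋ = x(k₁y − k₄(1−x−y−z)), ẏ = y(k₂z − k₁x), ż = z(−k₂y + k₃(1−x−y−z)). -/
def LV (k₁ k₂ k₃ k₄ : ℝ) (p : ℝ × ℝ × ℝ) : ℝ × ℝ × ℝ :=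
  (p.1 * (k₁ * p.2.1 - k₄ * (1 - p.1 - p.2.1 - p.2.2)),
   p.2.1 * (k₂ * p.2.2 - k₁ * p.1),
   p.2.2 * (-k₂ * p.2.1 + k₃ * (1 - p.1 - p.2.1 - p.2.2)))

/-!
On the segment, `1 - x - y - z = k₁ w / (k₄ (k₁ + k₄))` with `w = k₄ - (k₃ + k₄) z`, and `w` has the
sign of `k₄` exactly when `z < k₄ / (k₃ + k₄)`; so for positive `kᵢ` every coordinate, and the slack
`1 - x - y - z`, is a quotient of positive numbers. The point is an equilibrium because
`k₁ y = k₄ (1 - x - y - z)`, `k₂ z = k₁ x` and `k₂ y = k₃ (1 - x - y - z)` there, the last two by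
`k₁ k₃ = k₂ k₄`. Negating all `kᵢ` negates the vector field and leaves the segment unchanged, which
reduces the negative case to the positive one.
-/

lemma LV_neg (k₁ k₂ k₃ k₄ : ℝ) (p : ℝ × ℝ × ℝ) :
    LV (-k₁) (-k₂) (-k₃) (-k₄) p = -LV k₁ k₂ k₃ k₄ p := by
  simp only [LV, Prod.neg_mk]
  ring_nf

lemma one_sub_coord_sum_segment_point {k₁ k₃ k₄ : ℝ} (h₄ : k₄ ≠ 0) (h₁₄ : k₁ + k₄ ≠ 0) (z : ℝ) :
    1 - (k₃ * z / k₄ + (k₄ - (k₃ + k₄) * z) / (k₁ + k₄) + z)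
      = k₁ * (k₄ - (k₃ + k₄) * z) / (k₄ * (k₁ + k₄)) := by
  field_simp
  ring

lemma LV_segment_point {k₁ k₂ k₃ k₄ : ℝ} (hS : k₁ * k₃ = k₂ * k₄) (h₄ : k₄ ≠ 0)
    (h₁₄ : k₁ + k₄ ≠ 0) (z : ℝ) :
    LV k₁ k₂ k₃ k₄ (k₃ * z / k₄, (k₄ - (k₃ + k₄) * z) / (k₁ + k₄), z) = 0 := by
  simp only [LV, Prod.ext_iff, Prod.fst_zero, Prod.snd_zero]
  refine ⟨?_, ?_, ?_⟩ <;> field_simp <;> ring_nf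
  · linear_combination (z ^ 2 * k₄ + z ^ 2 * k₃ - z * k₄) * hS
  · linear_combination (z * k₄ - z ^ 2 * k₄ - z ^ 2 * k₃) * hS

lemma segment_point_interior_equilibrium_of_pos {k₁ k₂ k₃ k₄ : ℝ}
    (h₁ : 0 < k₁) (h₃ : 0 < k₃) (h₄ : 0 < k₄) (hS : k₁ * k₃ = k₂ * k₄)
    {z : ℝ} (hz0 : 0 < z) (hz1 : z < k₄ / (k₃ + k₄)) :
    let x := k₃ * z / k₄
    let y := (k₄ - (k₃ + k₄) * z) / (k₁ + k₄)
    0 < x ∧ 0 < y ∧ 0 < z ∧ x + y + z < 1 ∧ LV k₁ k₂ k₃ k₄ (x, y, z) = 0 := by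
  intro x y
  have hw : 0 < k₄ - (k₃ + k₄) * z := by
    rw [lt_div_iff₀ (by positivity)] at hz1
    linarith
  have hslack :=
    one_sub_coord_sum_segment_point (k₃ := k₃) h₄.ne' (by positivity : k₁ + k₄ ≠ 0) z
  refine ⟨by positivity, by positivity, hz0, ?_, LV_segment_point hS h₄.ne' (by positivity) z⟩
  have : 0 < k₁ * (k₄ - (k₃ + k₄) * z) / (k₄ * (k₁ + k₄)) := by positivity
  linarith

/-- If all the `kᵢ` are positive (or all negative) and `k₁k₃ = k₂k₄`, then every
point of the open segment `R` lies in the interior of the simplex and is a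
singular point of the system. -/
theorem stmt2 (k₁ k₂ k₃ k₄ : ℝ)
    (hsign : (0 < k₁ ∧ 0 < k₂ ∧ 0 < k₃ ∧ 0 < k₄) ∨ (k₁ < 0 ∧ k₂ < 0 ∧ k₃ < 0 ∧ k₄ < 0))
    (hS : k₁ * k₃ = k₂ * k₄)
    (z : ℝ) (hz0 : 0 < z) (hz1 : z < k₄ / (k₃ + k₄)) :
    let x := k₃ * z / k₄
    let y := (k₄ - (k₃ + k₄) * z) / (k₁ + k₄)
    0 < x ∧ 0 < y ∧ 0 < z ∧ x + y + z < 1 ∧ LV k₁ k₂ k₃ k₄ (x, y, z) = 0 := by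
  rcases hsign with ⟨h₁, -, h₃, h₄⟩ | ⟨h₁, -, h₃, h₄⟩
  · exact segment_point_interior_equilibrium_of_pos h₁ h₃ h₄ hS hz0 hz1
  · have hS' : -k₁ * -k₃ = -k₂ * -k₄ := by linear_combination hS
    have hz1' : z < -k₄ / (-k₃ + -k₄) := by rwa [← neg_add, neg_div_neg_eq]
    have := segment_point_interior_equilibrium_of_pos (neg_pos.2 h₁) (neg_pos.2 h₃)
      (neg_pos.2 h₄) hS' hz0 hz1'
    rw [show -k₄ - (-k₃ + -k₄) * z = -(k₄ - (k₃ + k₄) * z) by ring, ← neg_add, neg_mul,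
      neg_div_neg_eq, neg_div_neg_eq] at this
    simpa only [LV_neg, neg_eq_zero] using this
end

section
/- Assume k₁k₂k₃k₄ ≠ 0 and k₁k₃ ≠ k₂k₄. Then the system ẋ = x(k₁y − k₄(1−x−y−z)), ẏ = y(k₂z − k₁x), ż = z(−k₂y + k₃(1−x−y−z)) has no singular point in the interior of the simplex T, i.e. no point with x > 0, y > 0, z > 0 and x+y+z < 1 at which all three right-hand sides vanish. -/
/-! At an interior singular point, with `w = 1 - x - y - z > 0`, the first and third
equations reduce to `k₁ y = k₄ w` and `k₃ w = k₂ y`. Multiplying them gives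
`k₁ k₃ y w = k₂ k₄ y w`, and `y w ≠ 0` forces `k₁ k₃ = k₂ k₄`. -/

theorem LV_eq_zero_iff_of_ne_zero {k₁ k₂ k₃ k₄ x y z : ℝ} (hx : x ≠ 0) (hy : y ≠ 0)
    (hz : z ≠ 0) :
    LV k₁ k₂ k₃ k₄ (x, y, z) = 0 ↔
      k₁ * y = k₄ * (1 - x - y - z) ∧ k₂ * z = k₁ * x ∧ k₃ * (1 - x - y - z) = k₂ * y := by
  simp only [LV, Prod.mk_eq_zero, mul_eq_zero, hx, hy, hz, false_or, sub_eq_zero]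
  constructor <;> rintro ⟨h₁, h₂, h₃⟩ <;> exact ⟨h₁, h₂, by linarith⟩

theorem mul_eq_mul_of_cross_balance {k₁ k₂ k₃ k₄ y w : ℝ} (hy : y ≠ 0) (hw : w ≠ 0)
    (h₁ : k₁ * y = k₄ * w) (h₃ : k₃ * w = k₂ * y) : k₁ * k₃ = k₂ * k₄ := by
  have key : (k₁ * k₃) * (y * w) = (k₂ * k₄) * (y * w) := by
    linear_combination k₃ * w * h₁ + k₄ * w * h₃
  exact mul_right_cancel₀ (mul_ne_zero hy hw) key

theorem stmt3_general (k₁ k₂ k₃ k₄ : ℝ)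
    (hS : k₁ * k₃ ≠ k₂ * k₄) (x y z : ℝ)
    (hx : 0 < x) (hy : 0 < y) (hz : 0 < z) (hsum : x + y + z < 1) :
    LV k₁ k₂ k₃ k₄ (x, y, z) ≠ 0 := by
  intro h
  obtain ⟨h₁, -, h₃⟩ := (LV_eq_zero_iff_of_ne_zero hx.ne' hy.ne' hz.ne').mp h
  have hw : 1 - x - y - z ≠ 0 := by linarith
  exact hS (mul_eq_mul_of_cross_balance hy.ne' hw h₁ h₃)

/-- If `k₁k₂k₃k₄ ≠ 0` and `k₁k₃ ≠ k₂k₄`, the system has no singular point in the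
interior of the simplex. -/
theorem stmt3 (k₁ k₂ k₃ k₄ : ℝ) (hNZ : k₁ * k₂ * k₃ * k₄ ≠ 0)
    (hS : k₁ * k₃ ≠ k₂ * k₄) (x y z : ℝ)
    (hx : 0 < x) (hy : 0 < y) (hz : 0 < z) (hsum : x + y + z < 1) :
    LV k₁ k₂ k₃ k₄ (x, y, z) ≠ 0 :=
  stmt3_general k₁ k₂ k₃ k₄ hS x y z hx hy hz hsum
end

section
/- Assume the parameters k₁,k₂,k₃,k₄ satisfy k ∉ PS, i.e. it is not the case that k₁k₂ > 0, k₁k₃ > 0 and k₁k₄ > 0, together with k₁k₂k₃k₄ ≠ 0. Then the system ẋ = x(k₁y − k₄(1−x−y−z)), ẏ = y(k₂z − k₁x), ż = z(−k₂y + k₃(1−x−y−z)) has no singular point in the open simplex {x > 0, y > 0, z > 0, x+y+z < 1}, even if k₁k₃ = k₂k₄. -/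
/-- If `k ∉ PS` (i.e. not all of `k₁k₂ > 0`, `k₁k₃ > 0`, `k₁k₄ > 0` hold) and
`k₁k₂k₃k₄ ≠ 0`, then the system has no singular point in the open simplex,
even if `k₁k₃ = k₂k₄`. -/
theorem stmt4 (k₁ k₂ k₃ k₄ : ℝ)
    (hPS : ¬ (k₁ * k₂ > 0 ∧ k₁ * k₃ > 0 ∧ k₁ * k₄ > 0))
    (hNZ : k₁ * k₂ * k₃ * k₄ ≠ 0) (x y z : ℝ)
    (hx : 0 < x) (hy : 0 < y) (hz : 0 < z) (hsum : x + y + z < 1) :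
    LV k₁ k₂ k₃ k₄ (x, y, z) ≠ 0 := by
  intro h
  simp only [LV, Prod.ext_iff, Prod.fst_zero, Prod.snd_zero] at h
  obtain ⟨e1, e2, e3⟩ := h
  have hw : 0 < 1 - x - y - z := by linarith
  have hk1 : k₁ ≠ 0 := by rintro rfl; simp at hNZ
  have hk2 : k₂ ≠ 0 := by rintro rfl; simp at hNZ
  have hk3 : k₃ ≠ 0 := by rintro rfl; simp at hNZ
  have hk4 : k₄ ≠ 0 := by rintro rfl; simp at hNZ
  have f1 : k₁ * y - k₄ * (1 - x - y - z) = 0 :=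
    (mul_eq_zero.mp e1).resolve_left hx.ne'
  have f2 : k₂ * z - k₁ * x = 0 := (mul_eq_zero.mp e2).resolve_left hy.ne'
  have f3 : -k₂ * y + k₃ * (1 - x - y - z) = 0 :=
    (mul_eq_zero.mp e3).resolve_left hz.ne'
  have p2 : (0:ℝ) < (k₂ * z) ^ 2 := by positivity
  have p1 : (0:ℝ) < (k₁ * y) ^ 2 := by positivity
  have p3 : (0:ℝ) < (k₃ * (1 - x - y - z)) ^ 2 := by positivity
  have q12 : k₁ * k₂ * (x * z) = (k₂ * z) ^ 2 := by
    rw [show k₁ * k₂ * (x * z) = (k₁ * x) * (k₂ * z) by ring,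
      show k₁ * x = k₂ * z by linarith]; ring
  have q14 : k₁ * k₄ * (y * (1 - x - y - z)) = (k₁ * y) ^ 2 := by
    rw [show k₁ * k₄ * (y * (1 - x - y - z)) = (k₁ * y) * (k₄ * (1 - x - y - z)) by ring,
      show k₄ * (1 - x - y - z) = k₁ * y by linarith]; ring
  have q23 : k₂ * k₃ * (y * (1 - x - y - z)) = (k₃ * (1 - x - y - z)) ^ 2 := by
    rw [show k₂ * k₃ * (y * (1 - x - y - z)) = (k₂ * y) * (k₃ * (1 - x - y - z)) by ring,
      show k₂ * y = k₃ * (1 - x - y - z) by linarith]; ring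
  have h12 : k₁ * k₂ > 0 := by
    by_contra h'
    push_neg at h'
    nlinarith [mul_pos hx hz]
  have h14 : k₁ * k₄ > 0 := by
    by_contra h'
    push_neg at h'
    nlinarith [mul_pos hy hw]
  have h23 : k₂ * k₃ > 0 := by
    by_contra h'
    push_neg at h'
    nlinarith [mul_pos hy hw]
  have h13 : k₁ * k₃ > 0 := by
    by_contra h'
    push_neg at h'
    nlinarith [mul_pos h12 h23, sq_nonneg k₂, sq_pos_of_ne_zero hk2]
  exact hPS ⟨h12, h13, h14⟩
end

section
/- Assume k₁,k₂,k₃,k₄ all have the same sign and k₁k₃ = k₂k₄. At each singular point p = (k₃z/k₄, (k₄ − (k₃+k₄)z)/(k₁+k₄), z) with 0 < z < k₄/(k₃+k₄), the Jacobian matrix of the Lotka–Volterra vector field has characteristic polynomial λ(λ² + b), where b = z·y·(k₁+k₂)(k₂+k₃) > 0 and y = (k₄ − (k₃+k₄)z)/(k₁+k₄); hence the Jacobian has eigenvalues 0, i√b, −i√b. -/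
/-!
The Jacobian has trace `0`, and its first and third rows are proportional, so its determinant
vanishes; hence its characteristic polynomial is `λ³ + bλ`, where `b` is the sum of its principal
`2 × 2` minors. Positivity of `b` reduces to the case of positive rates, because `y` and `b` are
unchanged by `k ↦ -k`, and for positive rates the bound on `z` is exactly `y > 0`.
-/

open Matrix Complex

/-- The Jacobian matrix of the Lotka–Volterra vector field at the interior
singular points. -/
def JacLV (k₁ k₂ k₃ : ℝ) (y z : ℝ) : Matrix (Fin 3) (Fin 3) ℝ :=
  !![k₃ * z, (k₂ + k₃) * z, k₃ * z;
     -k₁ * y, 0, k₂ * y;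
     -k₃ * z, -(k₂ + k₃) * z, -k₃ * z]

theorem Matrix.det_smul_one_sub_eq_eval_charpoly {n R : Type*} [Fintype n] [DecidableEq n]
    [CommRing R] (M : Matrix n n R) (t : R) :
    (t • (1 : Matrix n n R) - M).det = M.charpoly.eval t := by
  rw [eval_charpoly, smul_one_eq_diagonal, scalar_apply]

open Polynomial in
theorem charpoly_jacLV (k₁ k₂ k₃ y z : ℝ) :
    (JacLV k₁ k₂ k₃ y z).charpoly = X * (X ^ 2 + C (z * y * (k₁ + k₂) * (k₂ + k₃))) := by
  simp only [Matrix.charpoly, charmatrix, JacLV, det_fin_three, scalar_apply,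
    RingHom.mapMatrix_apply, Matrix.sub_apply, diagonal_apply_eq, map_apply, of_apply, cons_val',
    cons_val_zero, cons_val_fin_one, cons_val_one, cons_val, Fin.isValue, ne_eq, Fin.reduceEq,
    not_false_eq_true, diagonal_apply_ne, map_mul, map_neg, map_add, map_zero]
  ring

theorem interior_b_pos_of_pos {k₁ k₂ k₃ k₄ z : ℝ} (h₁ : 0 < k₁) (h₂ : 0 < k₂) (h₃ : 0 < k₃)
    (h₄ : 0 < k₄) (hz0 : 0 < z) (hz1 : z < k₄ / (k₃ + k₄)) :
    0 < z * ((k₄ - (k₃ + k₄) * z) / (k₁ + k₄)) * (k₁ + k₂) * (k₂ + k₃) := by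
  have : 0 < k₄ - (k₃ + k₄) * z := by
    rw [lt_div_iff₀ (by positivity)] at hz1
    linarith
  positivity

theorem interior_b_pos {k₁ k₂ k₃ k₄ z : ℝ}
    (hsign : (0 < k₁ ∧ 0 < k₂ ∧ 0 < k₃ ∧ 0 < k₄) ∨ (k₁ < 0 ∧ k₂ < 0 ∧ k₃ < 0 ∧ k₄ < 0))
    (hz0 : 0 < z) (hz1 : z < k₄ / (k₃ + k₄)) :
    0 < z * ((k₄ - (k₃ + k₄) * z) / (k₁ + k₄)) * (k₁ + k₂) * (k₂ + k₃) := by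
  rcases hsign with ⟨h₁, h₂, h₃, h₄⟩ | ⟨h₁, h₂, h₃, h₄⟩
  · exact interior_b_pos_of_pos h₁ h₂ h₃ h₄ hz0 hz1
  · have hneg := interior_b_pos_of_pos (neg_pos.2 h₁) (neg_pos.2 h₂) (neg_pos.2 h₃)
      (neg_pos.2 h₄) hz0 (by rwa [← neg_add, neg_div_neg_eq])
    convert hneg using 1
    rw [← neg_add, ← neg_div_neg_eq]
    ring

theorem stmt5_general (k₁ k₂ k₃ k₄ : ℝ)
    (hsign : (0 < k₁ ∧ 0 < k₂ ∧ 0 < k₃ ∧ 0 < k₄) ∨ (k₁ < 0 ∧ k₂ < 0 ∧ k₃ < 0 ∧ k₄ < 0))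
    (z : ℝ) (hz0 : 0 < z) (hz1 : z < k₄ / (k₃ + k₄)) :
    let y := (k₄ - (k₃ + k₄) * z) / (k₁ + k₄)
    let b := z * y * (k₁ + k₂) * (k₂ + k₃)
    0 < b ∧
    (∀ l : ℝ, Matrix.det (l • (1 : Matrix (Fin 3) (Fin 3) ℝ) - JacLV k₁ k₂ k₃ y z)
        = l * (l ^ 2 + b)) ∧
    (∀ μ : ℂ, μ = 0 ∨ μ = Complex.I * Real.sqrt b ∨ μ = -(Complex.I * Real.sqrt b) →
      Matrix.det (μ • (1 : Matrix (Fin 3) (Fin 3) ℂ)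
          - (JacLV k₁ k₂ k₃ y z).map (Complex.ofReal)) = 0) := by
  intro y b
  have hb : 0 < b := interior_b_pos hsign hz0 hz1
  have hchar := charpoly_jacLV k₁ k₂ k₃ y z
  refine ⟨hb, fun l => ?_, fun μ hμ => ?_⟩
  · simp [det_smul_one_sub_eq_eval_charpoly, hchar, b]
  · have hdet : ∀ μ : ℂ, (μ • (1 : Matrix (Fin 3) (Fin 3) ℂ)
        - (JacLV k₁ k₂ k₃ y z).map ofReal).det = μ * (μ ^ 2 + b) := fun μ => by
      rw [det_smul_one_sub_eq_eval_charpoly,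
        show (JacLV k₁ k₂ k₃ y z).map ofReal = (JacLV k₁ k₂ k₃ y z).map ofRealHom from rfl,
        charpoly_map, hchar]
      simp [b]
    have hsq : (I * Real.sqrt b) ^ 2 = -b := by
      rw [mul_pow, I_sq, ← ofReal_pow, Real.sq_sqrt hb.le]
      ring
    rw [hdet]
    rcases hμ with rfl | rfl | rfl <;> simp [hsq]

/-- If all `kᵢ` have the same sign and `k₁k₃ = k₂k₄`, then at each interior
singular point the Jacobian has characteristic polynomial `λ(λ² + b)` with
`b = z y (k₁+k₂)(k₂+k₃) > 0`, hence eigenvalues `0`, `i√b` and `−i√b`. -/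
theorem stmt5 (k₁ k₂ k₃ k₄ : ℝ)
    (hsign : (0 < k₁ ∧ 0 < k₂ ∧ 0 < k₃ ∧ 0 < k₄) ∨ (k₁ < 0 ∧ k₂ < 0 ∧ k₃ < 0 ∧ k₄ < 0))
    (hS : k₁ * k₃ = k₂ * k₄)
    (z : ℝ) (hz0 : 0 < z) (hz1 : z < k₄ / (k₃ + k₄)) :
    let y := (k₄ - (k₃ + k₄) * z) / (k₁ + k₄)
    let b := z * y * (k₁ + k₂) * (k₂ + k₃)
    0 < b ∧
    (∀ l : ℝ, Matrix.det (l • (1 : Matrix (Fin 3) (Fin 3) ℝ) - JacLV k₁ k₂ k₃ y z)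
        = l * (l ^ 2 + b)) ∧
    (∀ μ : ℂ, μ = 0 ∨ μ = Complex.I * Real.sqrt b ∨ μ = -(Complex.I * Real.sqrt b) →
      Matrix.det (μ • (1 : Matrix (Fin 3) (Fin 3) ℂ)
          - (JacLV k₁ k₂ k₃ y z).map (Complex.ofReal)) = 0) :=
  stmt5_general k₁ k₂ k₃ k₄ hsign z hz0 hz1
end

section
/- Suppose a C¹ vector field F on ℝ³ admits p functions f₁,…,f_p (each C¹ and nowhere zero on an open set U) and functions K₁,…,K_p with ∇f_i · F = K_i f_i on U. If there exist real numbers λ₁,…,λ_p, not all zero, with Σᵢ λᵢKᵢ = 0 on U, then the function G = |f₁|^{λ₁}···|f_p|^{λ_p} satisfies ∇G · F = 0 on U, i.e. G is a first integral of F on U. -/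
/-!
Logarithmic differentiation: near a point where no `fᵢ` vanishes,
`G = ∏ |fᵢ|^{λᵢ} = exp (∑ λᵢ log fᵢ)`, so `∇G · F = G · ∑ λᵢ (∇fᵢ · F) / fᵢ = G · ∑ λᵢ Kᵢ = 0`.
-/

open Filter Finset Topology

/-- `Real.log` ignores signs, so no absolute value is needed on the right. -/
theorem Real.prod_abs_rpow_eq_exp_sum {ι : Type*} (s : Finset ι) {a : ι → ℝ} (c : ι → ℝ)
    (ha : ∀ i ∈ s, a i ≠ 0) : ∏ i ∈ s, |a i| ^ c i = exp (∑ i ∈ s, c i * log (a i)) := by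
  rw [exp_sum]
  refine prod_congr rfl fun i hi => ?_
  rw [rpow_def_of_pos (abs_pos.2 (ha i hi)), log_abs, mul_comm]

theorem HasFDerivAt.prod_abs_rpow {E ι : Type*} [NormedAddCommGroup E] [NormedSpace ℝ E]
    {s : Finset ι} {f : ι → E → ℝ} {f' : ι → E →L[ℝ] ℝ} {x : E} (c : ι → ℝ)
    (hf : ∀ i ∈ s, HasFDerivAt (f i) (f' i) x) (hne : ∀ i ∈ s, f i x ≠ 0) :
    HasFDerivAt (fun y => ∏ i ∈ s, |f i y| ^ c i)
      ((∏ i ∈ s, |f i x| ^ c i) • ∑ i ∈ s, (c i / f i x) • f' i) x := by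
  have hne_nhds : ∀ᶠ y in 𝓝 x, ∀ i ∈ s, f i y ≠ 0 :=
    (eventually_all_finset s).2 fun i hi => (hf i hi).continuousAt.eventually_ne (hne i hi)
  have hlog : HasFDerivAt (fun y => ∑ i ∈ s, c i * Real.log (f i y))
      (∑ i ∈ s, (c i / f i x) • f' i) x := by
    refine HasFDerivAt.fun_sum fun i hi => ?_
    simpa only [smul_smul, smul_eq_mul, div_eq_mul_inv] using
      ((hf i hi).log (hne i hi)).fun_const_smul (c i)
  rw [Real.prod_abs_rpow_eq_exp_sum s c hne]
  exact hlog.exp.congr_of_eventuallyEq <|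
    hne_nhds.mono fun y hy => Real.prod_abs_rpow_eq_exp_sum s c hy

theorem stmt8_general (F : EuclideanSpace ℝ (Fin 3) → EuclideanSpace ℝ (Fin 3))
    (U : Set (EuclideanSpace ℝ (Fin 3))) (hU : IsOpen U)
    (p : ℕ) (f K : Fin p → EuclideanSpace ℝ (Fin 3) → ℝ)
    (hf : ∀ i, ContDiffOn ℝ 1 (f i) U)
    (hne : ∀ i, ∀ x ∈ U, f i x ≠ 0)
    (hinv : ∀ i, ∀ x ∈ U, fderiv ℝ (f i) x (F x) = K i x * f i x)
    (lam : Fin p → ℝ)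
    (hsum : ∀ x ∈ U, ∑ i, lam i * K i x = 0) :
    ∀ x ∈ U, fderiv ℝ (fun y => ∏ i, |f i y| ^ (lam i)) x (F x) = 0 := by
  intro x hx
  have hdiff : ∀ i ∈ univ, HasFDerivAt (f i) (fderiv ℝ (f i) x) x := fun i _ =>
    ((hf i).differentiableOn one_ne_zero |>.differentiableAt (hU.mem_nhds hx)).hasFDerivAt
  have hterm : ∀ i, lam i / f i x * (K i x * f i x) = lam i * K i x := fun i => by
    field_simp [hne i x hx]
  rw [(HasFDerivAt.prod_abs_rpow lam hdiff fun i _ => hne i x hx).fderiv]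
  simp only [smul_apply, _root_.sum_apply, smul_eq_mul, hinv _ x hx, hterm, hsum x hx, mul_zero]

/-- Darboux integrability criterion: if a `C¹` vector field `F` on `ℝ³` admits
`C¹` functions `f₁,…,f_p`, nowhere zero on an open set `U`, with
`∇fᵢ · F = Kᵢ fᵢ` on `U`, and there are `λᵢ`, not all zero, with `Σ λᵢ Kᵢ = 0`
on `U`, then `G = ∏ |fᵢ|^{λᵢ}` is a first integral of `F` on `U`. -/
theorem stmt8 (F : EuclideanSpace ℝ (Fin 3) → EuclideanSpace ℝ (Fin 3))
    (hF : ContDiff ℝ 1 F)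
    (U : Set (EuclideanSpace ℝ (Fin 3))) (hU : IsOpen U)
    (p : ℕ) (f K : Fin p → EuclideanSpace ℝ (Fin 3) → ℝ)
    (hf : ∀ i, ContDiffOn ℝ 1 (f i) U)
    (hne : ∀ i, ∀ x ∈ U, f i x ≠ 0)
    (hinv : ∀ i, ∀ x ∈ U, fderiv ℝ (f i) x (F x) = K i x * f i x)
    (lam : Fin p → ℝ) (hlam : lam ≠ 0)
    (hsum : ∀ x ∈ U, ∑ i, lam i * K i x = 0) :
    ∀ x ∈ U, fderiv ℝ (fun y => ∏ i, |f i y| ^ (lam i)) x (F x) = 0 :=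
  stmt8_general F U hU p f K hf hne hinv lam hsum
end

section
/- For the Lotka–Volterra vector field X, the functions H = x^{k₂}z^{k₁}, V = y^{k₃}(1−x−y−z)^{k₂}, H̃ = x^{k₃}z^{k₄}, Ṽ = y^{k₄}(1−x−y−z)^{k₁} satisfy on the open simplex: XH = (k₁k₃ − k₂k₄)·x^{k₂}z^{k₁}(1−x−y−z), XV = (k₂k₄ − k₁k₃)·y^{k₃}(1−x−y−z)^{k₂}x, XH̃ = (k₁k₃ − k₂k₄)·x^{k₃}z^{k₄}y, XṼ = (k₂k₄ − k₁k₃)·y^{k₄}(1−x−y−z)^{k₁}z. In particular, each is a first integral on the open simplex if and only if k₁k₃ = k₂k₄. -/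
/-- The open simplex. -/
def openSimplex : Set (ℝ × ℝ × ℝ) :=
  {p | 0 < p.1 ∧ 0 < p.2.1 ∧ 0 < p.2.2 ∧ p.1 + p.2.1 + p.2.2 < 1}

/-- Lie derivative of a scalar function along the Lotka–Volterra field. -/
noncomputable def lieLV (k₁ k₂ k₃ k₄ : ℝ) (G : ℝ × ℝ × ℝ → ℝ) (p : ℝ × ℝ × ℝ) : ℝ :=
  fderiv ℝ G p (LV k₁ k₂ k₃ k₄ p)

theorem fderiv_rpow_mul_rpow_apply {E : Type*} [NormedAddCommGroup E] [NormedSpace ℝ E]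
    {u v : E → ℝ} {u' v' : StrongDual ℝ E} {x : E} (a b : ℝ) (hu : HasFDerivAt u u' x)
    (hv : HasFDerivAt v v' x) (hu0 : u x ≠ 0) (hv0 : v x ≠ 0) (w : E) :
    fderiv ℝ (fun q => u q ^ a * v q ^ b) x w
      = u x ^ a * v x ^ b * (a * (u' w / u x) + b * (v' w / v x)) := by
  have h : HasFDerivAt (fun q => u q ^ a * v q ^ b) _ x :=
    (hu.rpow_const (Or.inl hu0)).mul (hv.rpow_const (Or.inl hv0))
  rw [h.fderiv]
  simp only [_root_.add_apply, _root_.smul_apply, smul_eq_mul,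
    Real.rpow_sub_one hu0, Real.rpow_sub_one hv0]
  field_simp
  ring

section LotkaVolterra

open ContinuousLinearMap

variable (k₁ k₂ k₃ k₄ : ℝ) {p : ℝ × ℝ × ℝ}

theorem hasFDerivAt_snd_fst (p : ℝ × ℝ × ℝ) :
    HasFDerivAt (fun q : ℝ × ℝ × ℝ => q.2.1) ((fst ℝ ℝ ℝ).comp (snd ℝ ℝ (ℝ × ℝ))) p :=
  hasFDerivAt_fst.comp p hasFDerivAt_snd

theorem hasFDerivAt_snd_snd (p : ℝ × ℝ × ℝ) :
    HasFDerivAt (fun q : ℝ × ℝ × ℝ => q.2.2) ((snd ℝ ℝ ℝ).comp (snd ℝ ℝ (ℝ × ℝ))) p :=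
  hasFDerivAt_snd.comp p hasFDerivAt_snd

theorem hasFDerivAt_slack (p : ℝ × ℝ × ℝ) :
    HasFDerivAt (fun q : ℝ × ℝ × ℝ => 1 - q.1 - q.2.1 - q.2.2)
      (0 - fst ℝ ℝ (ℝ × ℝ) - (fst ℝ ℝ ℝ).comp (snd ℝ ℝ (ℝ × ℝ))
        - (snd ℝ ℝ ℝ).comp (snd ℝ ℝ (ℝ × ℝ))) p :=
  (((hasFDerivAt_const 1 p).sub hasFDerivAt_fst).sub (hasFDerivAt_snd_fst p)).sub
    (hasFDerivAt_snd_snd p)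

theorem LV_fst_div (hp : p.1 ≠ 0) :
    (LV k₁ k₂ k₃ k₄ p).1 / p.1 = k₁ * p.2.1 - k₄ * (1 - p.1 - p.2.1 - p.2.2) :=
  mul_div_cancel_left₀ _ hp

theorem LV_snd_fst_div (hp : p.2.1 ≠ 0) :
    (LV k₁ k₂ k₃ k₄ p).2.1 / p.2.1 = k₂ * p.2.2 - k₁ * p.1 :=
  mul_div_cancel_left₀ _ hp

theorem LV_snd_snd_div (hp : p.2.2 ≠ 0) :
    (LV k₁ k₂ k₃ k₄ p).2.2 / p.2.2 = -k₂ * p.2.1 + k₃ * (1 - p.1 - p.2.1 - p.2.2) :=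
  mul_div_cancel_left₀ _ hp

theorem LV_slack_div (hp : 1 - p.1 - p.2.1 - p.2.2 ≠ 0) :
    (0 - (LV k₁ k₂ k₃ k₄ p).1 - (LV k₁ k₂ k₃ k₄ p).2.1 - (LV k₁ k₂ k₃ k₄ p).2.2)
      / (1 - p.1 - p.2.1 - p.2.2) = k₄ * p.1 - k₃ * p.2.2 := by
  rw [div_eq_iff hp, LV]
  ring

theorem lieLV_fst_rpow_mul_snd_snd_rpow (a b : ℝ) (hx : p.1 ≠ 0) (hz : p.2.2 ≠ 0) :
    lieLV k₁ k₂ k₃ k₄ (fun q => q.1 ^ a * q.2.2 ^ b) p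
      = p.1 ^ a * p.2.2 ^ b * (a * (k₁ * p.2.1 - k₄ * (1 - p.1 - p.2.1 - p.2.2))
          + b * (-k₂ * p.2.1 + k₃ * (1 - p.1 - p.2.1 - p.2.2))) := by
  rw [lieLV, fderiv_rpow_mul_rpow_apply a b hasFDerivAt_fst (hasFDerivAt_snd_snd p) hx hz]
  simp only [coe_comp, coe_fst', coe_snd', Function.comp_apply]
  rw [LV_fst_div _ _ _ _ hx, LV_snd_snd_div _ _ _ _ hz]

theorem lieLV_snd_fst_rpow_mul_slack_rpow (a b : ℝ) (hy : p.2.1 ≠ 0)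
    (hs : 1 - p.1 - p.2.1 - p.2.2 ≠ 0) :
    lieLV k₁ k₂ k₃ k₄ (fun q => q.2.1 ^ a * (1 - q.1 - q.2.1 - q.2.2) ^ b) p
      = p.2.1 ^ a * (1 - p.1 - p.2.1 - p.2.2) ^ b
          * (a * (k₂ * p.2.2 - k₁ * p.1) + b * (k₄ * p.1 - k₃ * p.2.2)) := by
  rw [lieLV, fderiv_rpow_mul_rpow_apply a b (hasFDerivAt_snd_fst p) (hasFDerivAt_slack p) hy hs]
  simp only [sub_apply, zero_apply, coe_comp, coe_fst', coe_snd', Function.comp_apply]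
  rw [LV_snd_fst_div _ _ _ _ hy, LV_slack_div _ _ _ _ hs]

theorem lieLV_formulas : ∀ p ∈ openSimplex,
      lieLV k₁ k₂ k₃ k₄ (fun q => q.1 ^ k₂ * q.2.2 ^ k₁) p
        = (k₁ * k₃ - k₂ * k₄) * (p.1 ^ k₂ * p.2.2 ^ k₁ * (1 - p.1 - p.2.1 - p.2.2)) ∧
      lieLV k₁ k₂ k₃ k₄ (fun q => q.2.1 ^ k₃ * (1 - q.1 - q.2.1 - q.2.2) ^ k₂) p
        = (k₂ * k₄ - k₁ * k₃) * (p.2.1 ^ k₃ * (1 - p.1 - p.2.1 - p.2.2) ^ k₂ * p.1) ∧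
      lieLV k₁ k₂ k₃ k₄ (fun q => q.1 ^ k₃ * q.2.2 ^ k₄) p
        = (k₁ * k₃ - k₂ * k₄) * (p.1 ^ k₃ * p.2.2 ^ k₄ * p.2.1) ∧
      lieLV k₁ k₂ k₃ k₄ (fun q => q.2.1 ^ k₄ * (1 - q.1 - q.2.1 - q.2.2) ^ k₁) p
        = (k₂ * k₄ - k₁ * k₃) * (p.2.1 ^ k₄ * (1 - p.1 - p.2.1 - p.2.2) ^ k₁ * p.2.2) := by
  rintro p ⟨hx, hy, hz, hs⟩
  have hs : 1 - p.1 - p.2.1 - p.2.2 ≠ 0 := by linarith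
  simp only [lieLV_fst_rpow_mul_snd_snd_rpow _ _ _ _ _ _ hx.ne' hz.ne',
    lieLV_snd_fst_rpow_mul_slack_rpow _ _ _ _ _ _ hy.ne' hs]
  refine ⟨?_, ?_, ?_, ?_⟩ <;> ring

end LotkaVolterra

/-- On the open simplex, `XH`, `XV`, `XH̃`, `XṼ` are given by the stated explicit
formulas; consequently each of `H, V, H̃, Ṽ` is a first integral on the open
simplex if and only if `k₁k₃ = k₂k₄`. -/
theorem stmt9 (k₁ k₂ k₃ k₄ : ℝ) :
    (∀ p ∈ openSimplex,
      lieLV k₁ k₂ k₃ k₄ (fun q => q.1 ^ k₂ * q.2.2 ^ k₁) p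
        = (k₁ * k₃ - k₂ * k₄) * (p.1 ^ k₂ * p.2.2 ^ k₁ * (1 - p.1 - p.2.1 - p.2.2)) ∧
      lieLV k₁ k₂ k₃ k₄ (fun q => q.2.1 ^ k₃ * (1 - q.1 - q.2.1 - q.2.2) ^ k₂) p
        = (k₂ * k₄ - k₁ * k₃) * (p.2.1 ^ k₃ * (1 - p.1 - p.2.1 - p.2.2) ^ k₂ * p.1) ∧
      lieLV k₁ k₂ k₃ k₄ (fun q => q.1 ^ k₃ * q.2.2 ^ k₄) p
        = (k₁ * k₃ - k₂ * k₄) * (p.1 ^ k₃ * p.2.2 ^ k₄ * p.2.1) ∧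
      lieLV k₁ k₂ k₃ k₄ (fun q => q.2.1 ^ k₄ * (1 - q.1 - q.2.1 - q.2.2) ^ k₁) p
        = (k₂ * k₄ - k₁ * k₃) * (p.2.1 ^ k₄ * (1 - p.1 - p.2.1 - p.2.2) ^ k₁ * p.2.2)) ∧
    ((∀ p ∈ openSimplex,
        lieLV k₁ k₂ k₃ k₄ (fun q => q.1 ^ k₂ * q.2.2 ^ k₁) p = 0 ∧
        lieLV k₁ k₂ k₃ k₄ (fun q => q.2.1 ^ k₃ * (1 - q.1 - q.2.1 - q.2.2) ^ k₂) p = 0 ∧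
        lieLV k₁ k₂ k₃ k₄ (fun q => q.1 ^ k₃ * q.2.2 ^ k₄) p = 0 ∧
        lieLV k₁ k₂ k₃ k₄ (fun q => q.2.1 ^ k₄ * (1 - q.1 - q.2.1 - q.2.2) ^ k₁) p = 0)
      ↔ k₁ * k₃ = k₂ * k₄) := by
  have hF := lieLV_formulas k₁ k₂ k₃ k₄
  refine ⟨hF, fun h => ?_, fun hk p hp => ?_⟩
  · set c : ℝ × ℝ × ℝ := (1 / 4, 1 / 4, 1 / 4)
    have hc : c ∈ openSimplex := by norm_num [c, openSimplex]
    have hH : (k₁ * k₃ - k₂ * k₄) * (c.1 ^ k₂ * c.2.2 ^ k₁ * (1 - c.1 - c.2.1 - c.2.2)) = 0 :=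
      (hF c hc).1.symm.trans (h c hc).1
    have hpos : 0 < c.1 ^ k₂ * c.2.2 ^ k₁ * (1 - c.1 - c.2.1 - c.2.2) := by
      norm_num [c]
      positivity
    exact sub_eq_zero.1 ((mul_eq_zero.1 hH).resolve_right hpos.ne')
  · obtain ⟨h₁, h₂, h₃, h₄⟩ := hF p hp
    simp [h₁, h₂, h₃, h₄, hk]
end

section
/- Assume k₁k₂k₃k₄ ≠ 0 and k₁k₃ = k₂k₄. Then on the open simplex {x>0, y>0, z>0, x+y+z<1}, the first integrals H = x^{k₂}z^{k₁} and V = y^{k₃}(1−x−y−z)^{k₂} satisfy (x^{k₃}z^{k₄})^{k₁} = H^{k₄} and (y^{k₄}(1−x−y−z)^{k₁})^{k₃} = V^{k₄}, and the gradients ∇H and ∇V are linearly dependent at a point (x,y,z) only if k₃(1−x−y−z) = k₂y and k₂z = k₁x; consequently the set of points where ∇H and ∇V are linearly dependent has Lebesgue measure zero in ℝ³. -/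
/-! Both power identities reduce to `k₁k₃ = k₂k₄` via `(a^p b^q)^r = a^{pr} b^{qr}`. The positive
scalar factors of the gradients do not affect linear dependence, and `(k₂z, 0, k₁x)`,
`(−k₂y, δ, −k₂y)` can only be dependent if `δ = 0` and `k₂z = k₁x`. So the degenerate set lies
in the plane `k₂z = k₁x`, a proper subspace of `ℝ³`, which is Lebesgue-null. -/

open Real MeasureTheory

lemma rpow_mul_rpow_rpow {a b : ℝ} (ha : 0 ≤ a) (hb : 0 ≤ b) (p q r : ℝ) :
    (a ^ p * b ^ q) ^ r = a ^ (p * r) * b ^ (q * r) := by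
  rw [mul_rpow (rpow_nonneg ha _) (rpow_nonneg hb _), ← rpow_mul ha, ← rpow_mul hb]

lemma eq_zero_and_eq_of_not_linearIndependent_pair {K : Type*} [CommRing K] [IsDomain K]
    {α β γ δ : K} (hα : α ≠ 0) (hγ : γ ≠ 0)
    (h : ¬ LinearIndependent K ![(α, (0 : K), β), (γ, δ, γ)]) : δ = 0 ∧ α = β := by
  simp only [LinearIndependent.pair_iff, not_forall] at h
  obtain ⟨s, t, hst, hne⟩ := h
  simp only [Prod.smul_mk, Prod.mk_add_mk, Prod.mk_eq_zero, smul_eq_mul, mul_zero,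
    zero_add] at hst
  obtain ⟨h₁, h₂, h₃⟩ := hst
  have ht : t ≠ 0 := by
    rintro rfl
    simp_all
  have hs : s ≠ 0 := by
    rintro rfl
    simp_all
  refine ⟨(mul_eq_zero.1 h₂).resolve_left ht, mul_left_cancel₀ hs ?_⟩
  linear_combination h₁ - h₃

theorem eq_of_not_linearIndependent_gradients (k₁ k₂ k₃ : ℝ) (hk₂ : k₂ ≠ 0) {x y z : ℝ}
    (hx : 0 < x) (hy : 0 < y) (hz : 0 < z) (hs : x + y + z < 1)
    (h : ¬ LinearIndependent ℝ
          ![(x ^ (k₂ - 1) * z ^ (k₁ - 1)) • (k₂ * z, (0 : ℝ), k₁ * x),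
            (y ^ (k₃ - 1) * (1 - x - y - z) ^ (k₂ - 1)) •
              (-k₂ * y, k₃ * (1 - x - y - z) - k₂ * y, -k₂ * y)]) :
    k₃ * (1 - x - y - z) = k₂ * y ∧ k₂ * z = k₁ * x := by
  have hw : 0 < 1 - x - y - z := by linarith
  rw [LinearIndependent.pair_smul_smul_iff
    (by positivity : x ^ (k₂ - 1) * z ^ (k₁ - 1) ≠ 0).isUnit
    (by positivity : y ^ (k₃ - 1) * (1 - x - y - z) ^ (k₂ - 1) ≠ 0).isUnit] at h
  obtain ⟨hδ, hαβ⟩ := eq_zero_and_eq_of_not_linearIndependent_pair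
    (mul_ne_zero hk₂ hz.ne') (by simp [hk₂, hy.ne']) h
  exact ⟨sub_eq_zero.1 hδ, hαβ⟩

lemma volume_setOf_mul_eq_mul_eq_zero (b : ℝ) {a : ℝ} (ha : a ≠ 0) :
    volume {p : ℝ × ℝ × ℝ | b * p.2.2 = a * p.1} = 0 := by
  set f : ℝ × ℝ × ℝ →ₗ[ℝ] ℝ :=
    b • (LinearMap.snd ℝ ℝ ℝ ∘ₗ LinearMap.snd ℝ ℝ (ℝ × ℝ)) - a • LinearMap.fst ℝ ℝ (ℝ × ℝ)
  have hf : f ≠ 0 := fun h => ha (by simpa [f] using LinearMap.congr_fun h (1, 0, 0))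
  have hker : {p : ℝ × ℝ × ℝ | b * p.2.2 = a * p.1} = LinearMap.ker f := by
    ext p
    simp [f, sub_eq_zero]
  -- instance search does not find this for the nested product
  have := Measure.prod.instIsAddHaarMeasure (volume : Measure ℝ) (volume : Measure (ℝ × ℝ))
  rw [hker]
  exact Measure.addHaar_submodule volume _ (mt LinearMap.ker_eq_top.1 hf)

/-- Assume `k₁k₂k₃k₄ ≠ 0` and `k₁k₃ = k₂k₄`. Then on the open simplex the first
integrals `H = x^{k₂}z^{k₁}` and `V = y^{k₃}(1−x−y−z)^{k₂}` satisfy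
`H̃^{k₁} = H^{k₄}` and `Ṽ^{k₃} = V^{k₄}`; moreover the gradients
`∇H = x^{k₂−1}z^{k₁−1}(k₂z, 0, k₁x)` and
`∇V = y^{k₃−1}(1−x−y−z)^{k₂−1}(−k₂y, k₃(1−x−y−z)−k₂y, −k₂y)` are linearly
dependent at a point only if `k₃(1−x−y−z) = k₂y` and `k₂z = k₁x`, and the set of
such points has Lebesgue measure zero. -/
theorem stmt10 (k₁ k₂ k₃ k₄ : ℝ) (hNZ : k₁ * k₂ * k₃ * k₄ ≠ 0)
    (hS : k₁ * k₃ = k₂ * k₄) :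
    (∀ x y z : ℝ, 0 < x → 0 < y → 0 < z → x + y + z < 1 →
      ((x ^ k₃ * z ^ k₄) ^ k₁ = (x ^ k₂ * z ^ k₁) ^ k₄ ∧
       (y ^ k₄ * (1 - x - y - z) ^ k₁) ^ k₃ = (y ^ k₃ * (1 - x - y - z) ^ k₂) ^ k₄) ∧
      (¬ LinearIndependent ℝ
          ![(x ^ (k₂ - 1) * z ^ (k₁ - 1)) • (k₂ * z, (0 : ℝ), k₁ * x),
            (y ^ (k₃ - 1) * (1 - x - y - z) ^ (k₂ - 1)) •
              (-k₂ * y, k₃ * (1 - x - y - z) - k₂ * y, -k₂ * y)] →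
        k₃ * (1 - x - y - z) = k₂ * y ∧ k₂ * z = k₁ * x)) ∧
    MeasureTheory.volume
      {p : ℝ × ℝ × ℝ | 0 < p.1 ∧ 0 < p.2.1 ∧ 0 < p.2.2 ∧ p.1 + p.2.1 + p.2.2 < 1 ∧
        ¬ LinearIndependent ℝ
          ![(p.1 ^ (k₂ - 1) * p.2.2 ^ (k₁ - 1)) • (k₂ * p.2.2, (0 : ℝ), k₁ * p.1),
            (p.2.1 ^ (k₃ - 1) * (1 - p.1 - p.2.1 - p.2.2) ^ (k₂ - 1)) •
              (-k₂ * p.2.1, k₃ * (1 - p.1 - p.2.1 - p.2.2) - k₂ * p.2.1,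
                -k₂ * p.2.1)]} = 0 := by
  have hk₁ : k₁ ≠ 0 := by contrapose! hNZ; simp [hNZ]
  have hk₂ : k₂ ≠ 0 := by contrapose! hNZ; simp [hNZ]
  refine ⟨fun x y z hx hy hz hs => ⟨⟨?_, ?_⟩, eq_of_not_linearIndependent_gradients
    k₁ k₂ k₃ hk₂ hx hy hz hs⟩, ?_⟩
  · rw [rpow_mul_rpow_rpow hx.le hz.le, rpow_mul_rpow_rpow hx.le hz.le, mul_comm k₃, hS,
      mul_comm k₄]
  · have hw : 0 ≤ 1 - x - y - z := by linarith
    rw [rpow_mul_rpow_rpow hy.le hw, rpow_mul_rpow_rpow hy.le hw, mul_comm k₄, hS]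
  · refine measure_mono_null (fun p ⟨hx, hy, hz, hs, hdep⟩ => ?_)
      (volume_setOf_mul_eq_mul_eq_zero k₂ hk₁)
    exact (eq_of_not_linearIndependent_gradients k₁ k₂ k₃ hk₂ hx hy hz hs hdep).2
end

section
/- Let k₃/k₄ > 0 and set C* = (k₄/(k₄+k₃))·(k₃/(k₄+k₃))^{k₃/k₄}. For 0 < C < C*, the equation C·x^{−k₃/k₄} = 1 − x has exactly two solutions x in the interval (0,1); for C = C* it has exactly one solution, x = k₃/(k₃+k₄); and for C > C* it has no solutions in (0,1). -/
/-!
Multiplying by `x ^ p` with `p = k₃ / k₄ > 0` turns `C x^{-p} = 1 - x` into `x ^ p (1 - x) = C`.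
On `[0, 1]` the function `x ^ p (1 - x)` vanishes at both ends, increases strictly up to
`p / (p + 1)` and decreases strictly after it, so it takes every value in `(0, C*)` exactly twice,
its maximum `C*` only at `p / (p + 1) = k₃ / (k₃ + k₄)`, and no value above `C*`.
-/

open Real Set

section RpowMulOneSub

variable {p : ℝ}

lemma continuous_rpow_mul_one_sub (hp : 0 ≤ p) : Continuous fun x : ℝ => x ^ p * (1 - x) :=
  (continuous_rpow_const hp).mul (continuous_const.sub continuous_id)

lemma hasDerivAt_rpow_mul_one_sub (p : ℝ) {x : ℝ} (hx : 0 < x) :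
    HasDerivAt (fun x : ℝ => x ^ p * (1 - x)) (x ^ (p - 1) * (p - (p + 1) * x)) x := by
  have hderiv := (hasDerivAt_rpow_const (p := p) (Or.inl hx.ne')).mul
    ((hasDerivAt_id x).const_sub 1)
  refine hderiv.congr_deriv ?_
  have hpow : x ^ p = x ^ (p - 1) * x := by rw [← rpow_add_one hx.ne', sub_add_cancel]
  rw [hpow]
  simp only [id_eq]
  ring

lemma div_add_one_mem_Ioo (hp : 0 < p) : p / (p + 1) ∈ Ioo (0 : ℝ) 1 :=
  ⟨by positivity, (div_lt_one (by linarith)).2 (by linarith)⟩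

lemma strictMonoOn_rpow_mul_one_sub (hp : 0 < p) :
    StrictMonoOn (fun x : ℝ => x ^ p * (1 - x)) (Icc 0 (p / (p + 1))) := by
  refine strictMonoOn_of_deriv_pos (convex_Icc _ _)
    (continuous_rpow_mul_one_sub hp.le).continuousOn fun x hx => ?_
  rw [interior_Icc] at hx
  rw [(hasDerivAt_rpow_mul_one_sub p hx.1).deriv]
  have hlt := (lt_div_iff₀ (by linarith : (0 : ℝ) < p + 1)).1 hx.2
  exact mul_pos (rpow_pos_of_pos hx.1 _) (by linarith)

lemma strictAntiOn_rpow_mul_one_sub (hp : 0 < p) :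
    StrictAntiOn (fun x : ℝ => x ^ p * (1 - x)) (Icc (p / (p + 1)) 1) := by
  refine strictAntiOn_of_deriv_neg (convex_Icc _ _)
    (continuous_rpow_mul_one_sub hp.le).continuousOn fun x hx => ?_
  rw [interior_Icc] at hx
  have hx0 : 0 < x := (div_add_one_mem_Ioo hp).1.trans hx.1
  rw [(hasDerivAt_rpow_mul_one_sub p hx0).deriv]
  have hlt := (div_lt_iff₀ (by linarith : (0 : ℝ) < p + 1)).1 hx.1
  exact mul_neg_of_pos_of_neg (rpow_pos_of_pos hx0 _) (by linarith)

lemma rpow_mul_one_sub_lt_of_ne (hp : 0 < p) {x : ℝ} (hx : x ∈ Icc (0 : ℝ) 1)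
    (hne : x ≠ p / (p + 1)) :
    x ^ p * (1 - x) < (p / (p + 1)) ^ p * (1 - p / (p + 1)) := by
  obtain ⟨hs0, hs1⟩ := div_add_one_mem_Ioo hp
  rcases hne.lt_or_gt with hlt | hgt
  · exact strictMonoOn_rpow_mul_one_sub hp ⟨hx.1, hlt.le⟩ ⟨hs0.le, le_rfl⟩ hlt
  · exact strictAntiOn_rpow_mul_one_sub hp ⟨le_rfl, hs1.le⟩ ⟨hgt.le, hx.2⟩ hgt

lemma rpow_mul_one_sub_le (hp : 0 < p) {x : ℝ} (hx : x ∈ Icc (0 : ℝ) 1) :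
    x ^ p * (1 - x) ≤ (p / (p + 1)) ^ p * (1 - p / (p + 1)) := by
  rcases eq_or_ne x (p / (p + 1)) with rfl | hne
  · exact le_rfl
  · exact (rpow_mul_one_sub_lt_of_ne hp hx hne).le

lemma rpow_mul_one_sub_eq_max_iff (hp : 0 < p) {x : ℝ} (hx : x ∈ Icc (0 : ℝ) 1) :
    x ^ p * (1 - x) = (p / (p + 1)) ^ p * (1 - p / (p + 1)) ↔ x = p / (p + 1) := by
  refine ⟨fun heq => ?_, fun hxs => hxs ▸ rfl⟩
  by_contra hne
  exact (rpow_mul_one_sub_lt_of_ne hp hx hne).ne heq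

lemma exists_pair_rpow_mul_one_sub_eq (hp : 0 < p) {C : ℝ} (hC0 : 0 < C)
    (hC : C < (p / (p + 1)) ^ p * (1 - p / (p + 1))) :
    ∃ a b : ℝ, a ≠ b ∧ a ∈ Ioo (0 : ℝ) 1 ∧ b ∈ Ioo (0 : ℝ) 1 ∧
      a ^ p * (1 - a) = C ∧ b ^ p * (1 - b) = C ∧
      ∀ x ∈ Ioo (0 : ℝ) 1, x ^ p * (1 - x) = C → x = a ∨ x = b := by
  obtain ⟨hs0, hs1⟩ := div_add_one_mem_Ioo hp
  have hcont := (continuous_rpow_mul_one_sub hp.le).continuousOn (s := Icc 0 (p / (p + 1)))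
  have hcont' := (continuous_rpow_mul_one_sub hp.le).continuousOn (s := Icc (p / (p + 1)) 1)
  have hmem : C ∈ Ioo ((0 : ℝ) ^ p * (1 - 0)) ((p / (p + 1)) ^ p * (1 - p / (p + 1))) := by
    rw [zero_rpow hp.ne', zero_mul]; exact ⟨hC0, hC⟩
  have hmem' : C ∈ Ioo ((1 : ℝ) ^ p * (1 - 1)) ((p / (p + 1)) ^ p * (1 - p / (p + 1))) := by
    rw [sub_self, mul_zero]; exact ⟨hC0, hC⟩
  obtain ⟨a, ha, hfa⟩ := intermediate_value_Ioo hs0.le hcont hmem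
  obtain ⟨b, hb, hfb⟩ := intermediate_value_Ioo' hs1.le hcont' hmem'
  refine ⟨a, b, (ha.2.trans hb.1).ne, ⟨ha.1, ha.2.trans hs1⟩, ⟨hs0.trans hb.1, hb.2⟩, hfa, hfb,
    fun x hx hfx => ?_⟩
  rcases le_total x (p / (p + 1)) with hxle | hxge
  · exact .inl <| strictMonoOn_rpow_mul_one_sub hp |>.injOn ⟨hx.1.le, hxle⟩
      (Ioo_subset_Icc_self ha) (hfx.trans hfa.symm)
  · exact .inr <| strictAntiOn_rpow_mul_one_sub hp |>.injOn ⟨hxge, hx.2.le⟩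
      (Ioo_subset_Icc_self hb) (hfx.trans hfb.symm)

end RpowMulOneSub

lemma mul_rpow_neg_eq_one_sub_iff {p C x : ℝ} (hx : 0 < x) :
    C * x ^ (-p) = 1 - x ↔ x ^ p * (1 - x) = C := by
  rw [rpow_neg hx.le, ← div_eq_mul_inv, div_eq_iff (rpow_pos_of_pos hx p).ne', mul_comm, eq_comm]

lemma add_ne_zero_of_div_pos {a b : ℝ} (h : 0 < a / b) : a + b ≠ 0 := by
  intro hab
  rw [eq_neg_of_add_eq_zero_left hab, neg_div, div_self (by rintro rfl; simp at h)] at h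
  linarith

lemma div_add_eq_div_div_add_one {a b : ℝ} (h : 0 < a / b) :
    a / (a + b) = a / b / (a / b + 1) := by
  have hb : b ≠ 0 := by rintro rfl; simp at h
  have hab := add_ne_zero_of_div_pos h
  field_simp

lemma div_add_mul_div_add_rpow_eq {a b : ℝ} (h : 0 < a / b) :
    b / (b + a) * (a / (b + a)) ^ (a / b) =
      (a / b / (a / b + 1)) ^ (a / b) * (1 - a / b / (a / b + 1)) := by
  have hb : b / (b + a) = 1 - a / (b + a) := by
    rw [one_sub_div (add_comm a b ▸ add_ne_zero_of_div_pos h), add_sub_cancel_right]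
  rw [hb, add_comm b a, div_add_eq_div_div_add_one h, mul_comm]

/-- Intersection of the hyperbola leaves `z = C x^{-k₃/k₄}` with the edge
`z = 1 - x`, `0 < x < 1`: two solutions for `0 < C < C*`, one for `C = C*`,
none for `C > C*`, where `C* = (k₄/(k₄+k₃)) (k₃/(k₄+k₃))^{k₃/k₄}`. -/
theorem stmt11 (k₃ k₄ : ℝ) (h : 0 < k₃ / k₄) :
    let Cstar := k₄ / (k₄ + k₃) * (k₃ / (k₄ + k₃)) ^ (k₃ / k₄)
    (∀ C : ℝ, 0 < C → C < Cstar →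
      ∃ a b : ℝ, a ≠ b ∧ a ∈ Set.Ioo (0:ℝ) 1 ∧ b ∈ Set.Ioo (0:ℝ) 1 ∧
        C * a ^ (-(k₃ / k₄)) = 1 - a ∧ C * b ^ (-(k₃ / k₄)) = 1 - b ∧
        ∀ x ∈ Set.Ioo (0:ℝ) 1, C * x ^ (-(k₃ / k₄)) = 1 - x → x = a ∨ x = b) ∧
    (∀ x ∈ Set.Ioo (0:ℝ) 1,
      Cstar * x ^ (-(k₃ / k₄)) = 1 - x ↔ x = k₃ / (k₃ + k₄)) ∧
    (∀ C : ℝ, Cstar < C → ∀ x ∈ Set.Ioo (0:ℝ) 1,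
      C * x ^ (-(k₃ / k₄)) ≠ 1 - x) := by
  intro Cstar
  set p := k₃ / k₄
  have hxs : k₃ / (k₃ + k₄) = p / (p + 1) := div_add_eq_div_div_add_one h
  have hCstar : Cstar = (p / (p + 1)) ^ p * (1 - p / (p + 1)) :=
    div_add_mul_div_add_rpow_eq h
  refine ⟨fun C hC0 hC => ?_, fun x hx => ?_, fun C hC x hx => ?_⟩
  · obtain ⟨a, b, hab, ha, hb, hfa, hfb, huniq⟩ :=
      exists_pair_rpow_mul_one_sub_eq h hC0 (hCstar ▸ hC)
    exact ⟨a, b, hab, ha, hb, (mul_rpow_neg_eq_one_sub_iff ha.1).2 hfa,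
      (mul_rpow_neg_eq_one_sub_iff hb.1).2 hfb,
      fun x hx hx' => huniq x hx ((mul_rpow_neg_eq_one_sub_iff hx.1).1 hx')⟩
  · rw [mul_rpow_neg_eq_one_sub_iff hx.1, hCstar, hxs]
    exact rpow_mul_one_sub_eq_max_iff h (Ioo_subset_Icc_self hx)
  · rw [Ne, mul_rpow_neg_eq_one_sub_iff hx.1]
    exact (hC.trans_le' (hCstar ▸ rpow_mul_one_sub_le h (Ioo_subset_Icc_self hx))).ne
end

section
/- Assume k₁,k₂ have the same sign and k₃,k₄ have the same sign, all nonzero, and suppose k₁k₃ ≠ k₂k₄. Let x₀ ∈ (0,1). Define x₁ ∈ (0,1) as the unique solution different from x₀ of x^{k₃/k₄}(1−x) = x₀^{k₃/k₄}(1−x₀) (if x₀ ≠ k₃/(k₃+k₄)), and x₂ ∈ (0,1) as the unique solution different from x₀ of x^{k₂/k₁}(1−x) = x₀^{k₂/k₁}(1−x₀) (if x₀ ≠ k₂/(k₁+k₂)). Then x₁ ≠ x₂. Conversely, if k₁k₃ = k₂k₄ then x₁ = x₂. -/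
/-!
Write `f_q(x) = x^q (1 - x)`. For `q ≥ 0` it increases on `[0, q/(q+1)]` and decreases on
`[q/(q+1), 1]`, so each value is taken at most twice on `[0,1]`: the second root of
`f_q(x) = f_q(x₀)` is determined by `q` and `x₀`, which gives `x₁ = x₂` when `k₂/k₁ = k₃/k₄`.
Conversely, if `x ≠ x₀` solves both `f_p(x) = f_p(x₀)` and `f_q(x) = f_q(x₀)`, then
`(x/x₀)^p = (1-x₀)/(1-x) = (x/x₀)^q` with `x/x₀ ≠ 1`, forcing `p = q`.
-/

open Real Set

theorem eq_of_injOn_union_of_ne {α β : Type*} {f : α → β} {s t : Set α}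
    (hs : InjOn f s) (ht : InjOn f t) {x₀ a b : α} (hx₀ : x₀ ∈ s ∪ t)
    (ha : a ∈ s ∪ t) (hb : b ∈ s ∪ t) (hax₀ : a ≠ x₀) (hbx₀ : b ≠ x₀)
    (hfa : f a = f x₀) (hfb : f b = f x₀) : a = b := by
  rcases hx₀ with hx₀s | hx₀t
  · have mem_t : ∀ c ∈ s ∪ t, c ≠ x₀ → f c = f x₀ → c ∈ t := fun c hc hcx₀ hfc =>
      hc.resolve_left fun hcs => hcx₀ (hs hcs hx₀s hfc)
    exact ht (mem_t a ha hax₀ hfa) (mem_t b hb hbx₀ hfb) (hfa.trans hfb.symm)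
  · have mem_s : ∀ c ∈ s ∪ t, c ≠ x₀ → f c = f x₀ → c ∈ s := fun c hc hcx₀ hfc =>
      hc.resolve_right fun hct => hcx₀ (ht hct hx₀t hfc)
    exact hs (mem_s a ha hax₀ hfa) (mem_s b hb hbx₀ hfb) (hfa.trans hfb.symm)

noncomputable def powOneSub (q x : ℝ) : ℝ := x ^ q * (1 - x)

theorem hasDerivAt_powOneSub (q : ℝ) {x : ℝ} (hx : 0 < x) :
    HasDerivAt (powOneSub q) (x ^ (q - 1) * (q - (q + 1) * x)) x := by
  have hpow : HasDerivAt (fun x : ℝ => x ^ q) (q * x ^ (q - 1)) x :=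
    hasDerivAt_rpow_const (Or.inl hx.ne')
  refine (hpow.mul ((hasDerivAt_id' x).const_sub 1)).congr_deriv ?_
  have hsplit : x ^ q = x ^ (q - 1) * x := by
    rw [← rpow_add_one hx.ne', sub_add_cancel]
  rw [hsplit]
  ring

theorem continuous_powOneSub {q : ℝ} (hq : 0 ≤ q) : Continuous (powOneSub q) :=
  (continuous_rpow_const hq).mul (continuous_const.sub continuous_id)

theorem powOneSub_strictMonoOn {q : ℝ} (hq : 0 ≤ q) :
    StrictMonoOn (powOneSub q) (Icc 0 (q / (q + 1))) := by
  refine strictMonoOn_of_deriv_pos (convex_Icc _ _) (continuous_powOneSub hq).continuousOn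
    fun x hx => ?_
  rw [interior_Icc] at hx
  rw [(hasDerivAt_powOneSub q hx.1).deriv]
  have hbelow : x * (q + 1) < q := (lt_div_iff₀ (by linarith)).mp hx.2
  exact mul_pos (rpow_pos_of_pos hx.1 _) (by linarith)

theorem powOneSub_strictAntiOn {q : ℝ} (hq : 0 ≤ q) :
    StrictAntiOn (powOneSub q) (Icc (q / (q + 1)) 1) := by
  refine strictAntiOn_of_deriv_neg (convex_Icc _ _) (continuous_powOneSub hq).continuousOn
    fun x hx => ?_
  rw [interior_Icc] at hx
  have hx0 : 0 < x := (div_nonneg hq (by linarith)).trans_lt hx.1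
  rw [(hasDerivAt_powOneSub q hx0).deriv]
  have habove : q < x * (q + 1) := (div_lt_iff₀ (by linarith)).mp hx.1
  exact mul_neg_of_pos_of_neg (rpow_pos_of_pos hx0 _) (by linarith)

theorem eq_of_powOneSub_eq_of_ne {q x₀ a b : ℝ} (hq : 0 ≤ q) (hx₀ : x₀ ∈ Icc 0 1)
    (ha : a ∈ Icc 0 1) (hb : b ∈ Icc 0 1) (hax₀ : a ≠ x₀) (hbx₀ : b ≠ x₀)
    (hfa : powOneSub q a = powOneSub q x₀) (hfb : powOneSub q b = powOneSub q x₀) :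
    a = b := by
  have hcover : Icc 0 (q / (q + 1)) ∪ Icc (q / (q + 1)) 1 = Icc 0 1 :=
    Icc_union_Icc_eq_Icc (div_nonneg hq (by linarith))
      ((div_le_one (by linarith)).mpr (by linarith))
  rw [← hcover] at hx₀ ha hb
  exact eq_of_injOn_union_of_ne (powOneSub_strictMonoOn hq).injOn
    (powOneSub_strictAntiOn hq).injOn hx₀ ha hb hax₀ hbx₀ hfa hfb

theorem div_rpow_eq_of_powOneSub_eq {p x₀ x : ℝ} (hx₀ : x₀ ∈ Ioo 0 1) (hx : x ∈ Ioo 0 1)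
    (hfx : powOneSub p x = powOneSub p x₀) : (x / x₀) ^ p = (1 - x₀) / (1 - x) := by
  rw [div_rpow hx.1.le hx₀.1.le, div_eq_div_iff (rpow_pos_of_pos hx₀.1 p).ne'
    (by linarith [hx.2]), mul_comm (1 - x₀)]
  exact hfx

theorem exponent_eq_of_powOneSub_eq {p q x₀ x : ℝ} (hx₀ : x₀ ∈ Ioo 0 1)
    (hx : x ∈ Ioo 0 1) (hxx₀ : x ≠ x₀)
    (hp : powOneSub p x = powOneSub p x₀) (hq : powOneSub q x = powOneSub q x₀) : p = q := by
  have hratio_ne_one : x / x₀ ≠ 1 := fun h => hxx₀ ((div_eq_one_iff_eq hx₀.1.ne').mp h)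
  rw [← rpow_right_inj (div_pos hx.1 hx₀.1) hratio_ne_one,
    div_rpow_eq_of_powOneSub_eq hx₀ hx hp, div_rpow_eq_of_powOneSub_eq hx₀ hx hq]

theorem stmt13_general (k₁ k₂ k₃ k₄ : ℝ) (h12 : 0 < k₁ * k₂) (h34 : 0 < k₃ * k₄)
    (x₀ x₁ x₂ : ℝ) (hx₀ : x₀ ∈ Set.Ioo (0:ℝ) 1)
    (hx₁ : x₁ ∈ Set.Ioo (0:ℝ) 1) (hx₁ne : x₁ ≠ x₀)
    (heq₁ : x₁ ^ (k₃ / k₄) * (1 - x₁) = x₀ ^ (k₃ / k₄) * (1 - x₀))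
    (hx₂ : x₂ ∈ Set.Ioo (0:ℝ) 1) (hx₂ne : x₂ ≠ x₀)
    (heq₂ : x₂ ^ (k₂ / k₁) * (1 - x₂) = x₀ ^ (k₂ / k₁) * (1 - x₀)) :
    (k₁ * k₃ ≠ k₂ * k₄ → x₁ ≠ x₂) ∧ (k₁ * k₃ = k₂ * k₄ → x₁ = x₂) := by
  have hexp_iff : k₂ / k₁ = k₃ / k₄ ↔ k₁ * k₃ = k₂ * k₄ := by
    rw [div_eq_div_iff (left_ne_zero_of_mul h12.ne') (right_ne_zero_of_mul h34.ne')]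
    constructor <;> intro h <;> linarith
  refine ⟨fun hne hx₁₂ => hne (hexp_iff.mp ?_), fun hk => ?_⟩
  · subst hx₁₂
    exact exponent_eq_of_powOneSub_eq hx₀ hx₁ hx₁ne heq₂ heq₁
  · rw [hexp_iff.mpr hk] at heq₂
    exact eq_of_powOneSub_eq_of_ne (div_pos_iff.mpr (mul_pos_iff.mp h34)).le
      (Ioo_subset_Icc_self hx₀) (Ioo_subset_Icc_self hx₁) (Ioo_subset_Icc_self hx₂)
      hx₁ne hx₂ne heq₁ heq₂

/-- Second-intersection points of the two foliations through a common point
`(x₀,0,1−x₀)` of the edge `R_py`: if `k₁,k₂` share a sign and `k₃,k₄` share a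
sign, `x₁` is the second root in `(0,1)` of `x^{k₃/k₄}(1−x) = x₀^{k₃/k₄}(1−x₀)`
and `x₂` the second root of `x^{k₂/k₁}(1−x) = x₀^{k₂/k₁}(1−x₀)`, then
`x₁ ≠ x₂` when `k₁k₃ ≠ k₂k₄` and `x₁ = x₂` when `k₁k₃ = k₂k₄`. -/
theorem stmt13 (k₁ k₂ k₃ k₄ : ℝ) (h12 : 0 < k₁ * k₂) (h34 : 0 < k₃ * k₄)
    (x₀ x₁ x₂ : ℝ) (hx₀ : x₀ ∈ Set.Ioo (0:ℝ) 1)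
    (hx₀q : x₀ ≠ k₃ / (k₃ + k₄)) (hx₀p : x₀ ≠ k₂ / (k₁ + k₂))
    (hx₁ : x₁ ∈ Set.Ioo (0:ℝ) 1) (hx₁ne : x₁ ≠ x₀)
    (heq₁ : x₁ ^ (k₃ / k₄) * (1 - x₁) = x₀ ^ (k₃ / k₄) * (1 - x₀))
    (hx₂ : x₂ ∈ Set.Ioo (0:ℝ) 1) (hx₂ne : x₂ ≠ x₀)
    (heq₂ : x₂ ^ (k₂ / k₁) * (1 - x₂) = x₀ ^ (k₂ / k₁) * (1 - x₀)) :
    (k₁ * k₃ ≠ k₂ * k₄ → x₁ ≠ x₂) ∧ (k₁ * k₃ = k₂ * k₄ → x₁ = x₂) :=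
  stmt13_general k₁ k₂ k₃ k₄ h12 h34 x₀ x₁ x₂ hx₀ hx₁ hx₁ne heq₁ hx₂ hx₂ne heq₂
end

section
/- Assume k₁,k₂,k₃,k₄ are all positive. Then for any point on a trajectory of the Lotka–Volterra system in the open simplex, the function H(x,y,z) = x^{k₂}z^{k₁} is non-decreasing along trajectories when k₁k₃ − k₂k₄ > 0 and non-increasing when k₁k₃ − k₂k₄ < 0; specifically, the Lie derivative satisfies XH = (k₁k₃ − k₂k₄)·x^{k₂}z^{k₁}(1−x−y−z), which has the sign of k₁k₃ − k₂k₄ everywhere on the open simplex. -/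
/-!
Logarithmic differentiation: the derivative of `H = x^{k₂} z^{k₁}` along a field `v` is
`H · (k₂ v₁/x + k₁ v₃/z)`. For the Lotka–Volterra field `v₁/x = k₁y − k₄s` and `v₃/z = −k₂y + k₃s`
with `s = 1 − x − y − z`, so the `y`-terms cancel and `XH = (k₁k₃ − k₂k₄) H s`. On the open simplex
`H s > 0`, which gives the sign.
-/

theorem fderiv_rpow_fst_mul_rpow_snd_snd_apply {a b : ℝ} {p : ℝ × ℝ × ℝ}
    (hx : p.1 ≠ 0) (hz : p.2.2 ≠ 0) (v : ℝ × ℝ × ℝ) :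
    fderiv ℝ (fun q : ℝ × ℝ × ℝ => q.1 ^ a * q.2.2 ^ b) p v
      = p.1 ^ a * p.2.2 ^ b * (a * (v.1 / p.1) + b * (v.2.2 / p.2.2)) := by
  have hX := (Real.hasDerivAt_rpow_const (p := a) (Or.inl hx)).hasFDerivAt.comp p
    (hasFDerivAt_fst (p := p))
  have hZ := (Real.hasDerivAt_rpow_const (p := b) (Or.inl hz)).hasFDerivAt.comp p
    (hasFDerivAt_snd (p := p)).snd
  have hH : HasFDerivAt (fun q : ℝ × ℝ × ℝ => q.1 ^ a * q.2.2 ^ b) _ p := hX.mul hZ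
  rw [hH.fderiv]
  simp only [add_apply, smul_apply, ContinuousLinearMap.coe_comp, Function.comp_apply,
    ContinuousLinearMap.coe_fst', ContinuousLinearMap.coe_snd',
    ContinuousLinearMap.toSpanSingleton_apply, smul_eq_mul]
  rw [Real.rpow_sub_one hx, Real.rpow_sub_one hz]
  field_simp
  ring

theorem fderiv_rpow_mul_rpow_LV_apply (k₁ k₂ k₃ k₄ : ℝ) {p : ℝ × ℝ × ℝ}
    (hx : p.1 ≠ 0) (hz : p.2.2 ≠ 0) :
    fderiv ℝ (fun q : ℝ × ℝ × ℝ => q.1 ^ k₂ * q.2.2 ^ k₁) p (LV k₁ k₂ k₃ k₄ p)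
      = (k₁ * k₃ - k₂ * k₄) * (p.1 ^ k₂ * p.2.2 ^ k₁ * (1 - p.1 - p.2.1 - p.2.2)) := by
  rw [fderiv_rpow_fst_mul_rpow_snd_snd_apply hx hz, LV, mul_div_cancel_left₀ _ hx,
    mul_div_cancel_left₀ _ hz]
  ring

theorem stmt15_general (k₁ k₂ k₃ k₄ : ℝ)
    (p : ℝ × ℝ × ℝ) (hx : 0 < p.1) (hz : 0 < p.2.2)
    (hsum : p.1 + p.2.1 + p.2.2 < 1) :
    fderiv ℝ (fun q : ℝ × ℝ × ℝ => q.1 ^ k₂ * q.2.2 ^ k₁) p (LV k₁ k₂ k₃ k₄ p)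
      = (k₁ * k₃ - k₂ * k₄) * (p.1 ^ k₂ * p.2.2 ^ k₁ * (1 - p.1 - p.2.1 - p.2.2)) ∧
    (0 < k₁ * k₃ - k₂ * k₄ →
      0 < fderiv ℝ (fun q : ℝ × ℝ × ℝ => q.1 ^ k₂ * q.2.2 ^ k₁) p (LV k₁ k₂ k₃ k₄ p)) ∧
    (k₁ * k₃ - k₂ * k₄ < 0 →
      fderiv ℝ (fun q : ℝ × ℝ × ℝ => q.1 ^ k₂ * q.2.2 ^ k₁) p (LV k₁ k₂ k₃ k₄ p) < 0) := by
  have key := fderiv_rpow_mul_rpow_LV_apply k₁ k₂ k₃ k₄ hx.ne' hz.ne'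
  have hs : 0 < 1 - p.1 - p.2.1 - p.2.2 := by linarith
  have hpos : 0 < p.1 ^ k₂ * p.2.2 ^ k₁ * (1 - p.1 - p.2.1 - p.2.2) := by positivity
  refine ⟨key, fun h => ?_, fun h => ?_⟩ <;> rw [key]
  · exact mul_pos h hpos
  · exact mul_neg_of_neg_of_pos h hpos

/-- For positive parameters, the Lie derivative of `H = x^{k₂}z^{k₁}` along the
Lotka–Volterra field on the open simplex equals
`(k₁k₃ − k₂k₄) x^{k₂} z^{k₁} (1−x−y−z)`, which has the sign of `k₁k₃ − k₂k₄`;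
hence `H` is non-decreasing along trajectories when `k₁k₃ − k₂k₄ > 0` and
non-increasing when `k₁k₃ − k₂k₄ < 0`. -/
theorem stmt15 (k₁ k₂ k₃ k₄ : ℝ)
    (hk₁ : 0 < k₁) (hk₂ : 0 < k₂) (hk₃ : 0 < k₃) (hk₄ : 0 < k₄)
    (p : ℝ × ℝ × ℝ) (hx : 0 < p.1) (hy : 0 < p.2.1) (hz : 0 < p.2.2)
    (hsum : p.1 + p.2.1 + p.2.2 < 1) :
    fderiv ℝ (fun q : ℝ × ℝ × ℝ => q.1 ^ k₂ * q.2.2 ^ k₁) p (LV k₁ k₂ k₃ k₄ p)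
      = (k₁ * k₃ - k₂ * k₄) * (p.1 ^ k₂ * p.2.2 ^ k₁ * (1 - p.1 - p.2.1 - p.2.2)) ∧
    (0 < k₁ * k₃ - k₂ * k₄ →
      0 < fderiv ℝ (fun q : ℝ × ℝ × ℝ => q.1 ^ k₂ * q.2.2 ^ k₁) p (LV k₁ k₂ k₃ k₄ p)) ∧
    (k₁ * k₃ - k₂ * k₄ < 0 →
      fderiv ℝ (fun q : ℝ × ℝ × ℝ => q.1 ^ k₂ * q.2.2 ^ k₁) p (LV k₁ k₂ k₃ k₄ p) < 0) :=
  stmt15_general k₁ k₂ k₃ k₄ p hx hz hsum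
end

section
/- Assume k₁,k₂,k₃,k₄ all have the same sign and k₁k₃ = k₂k₄. Then the points p_py = (k₂/(k₁+k₂), 0, k₁/(k₁+k₂)) and q_py = (k₃/(k₃+k₄), 0, k₄/(k₃+k₄)) coincide, and the points p_xz = (0, k₄/(k₁+k₄), 0) and q_xz = (0, k₃/(k₂+k₃), 0) coincide. Moreover p_py = q_py and p_xz = q_xz are the two endpoints of the closure of the segment R = {(k₃z/k₄, (k₄−(k₃+k₄)z)/(k₁+k₄), z) : 0 ≤ z ≤ k₄/(k₃+k₄)} of interior singular points (the endpoints being the limits as z → 0 and z → k₄/(k₃+k₄)). -/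
open Filter Topology

section SameSign

variable {α : Type*} [Ring α] [LinearOrder α] [IsStrictOrderedRing α] {a b c : α}

lemma add_ne_zero_of_mul_pos (h : 0 < a * b) : a + b ≠ 0 := by
  rcases pos_and_pos_or_neg_and_neg_of_mul_pos h with ⟨ha, hb⟩ | ⟨ha, hb⟩
  · exact (add_pos ha hb).ne'
  · exact (add_neg ha hb).ne

lemma mul_pos_of_mul_pos_of_mul_pos (hab : 0 < a * b) (hac : 0 < a * c) : 0 < b * c := by
  rcases pos_and_pos_or_neg_and_neg_of_mul_pos hab with ⟨ha, hb⟩ | ⟨ha, hb⟩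
  · exact mul_pos hb (pos_of_mul_pos_right hac ha.le)
  · exact mul_pos_of_neg_of_neg hb (neg_of_mul_pos_right hac ha.le)

end SameSign

lemma div_add_eq_div_add_of_mul_eq {K : Type*} [Field K] {a b c d : K}
    (hab : a + b ≠ 0) (hcd : c + d ≠ 0) (h : a * c = b * d) :
    b / (a + b) = c / (c + d) := by
  rw [div_eq_div_iff hab hcd]
  linear_combination -h

/-- For `k ∈ PS ∩ S`, the points `p_py` and `q_py` coincide, the points `p_xz`
and `q_xz` coincide, and these two points are the endpoints of the closure of
the segment `R` of interior singular points: the parametrization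
`r(z) = (k₃z/k₄, (k₄−(k₃+k₄)z)/(k₁+k₄), z)` tends to `p_xz` as `z → 0⁺` and to
`q_py` as `z → (k₄/(k₃+k₄))⁻`. -/
theorem stmt18 (k₁ k₂ k₃ k₄ : ℝ)
    (hPS : k₁ * k₂ > 0 ∧ k₁ * k₃ > 0 ∧ k₁ * k₄ > 0)
    (hS : k₁ * k₃ = k₂ * k₄) :
    let p_py : ℝ × ℝ × ℝ := (k₂ / (k₁ + k₂), 0, k₁ / (k₁ + k₂))
    let q_py : ℝ × ℝ × ℝ := (k₃ / (k₃ + k₄), 0, k₄ / (k₃ + k₄))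
    let p_xz : ℝ × ℝ × ℝ := (0, k₄ / (k₁ + k₄), 0)
    let q_xz : ℝ × ℝ × ℝ := (0, k₃ / (k₂ + k₃), 0)
    let r : ℝ → ℝ × ℝ × ℝ :=
      fun z => (k₃ * z / k₄, (k₄ - (k₃ + k₄) * z) / (k₁ + k₄), z)
    p_py = q_py ∧ p_xz = q_xz ∧
    Tendsto r (𝓝[>] 0) (𝓝 p_xz) ∧
    Tendsto r (𝓝[<] (k₄ / (k₃ + k₄))) (𝓝 q_py) := by
  obtain ⟨h₁₂, h₁₃, h₁₄⟩ := hPS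
  intro p_py q_py p_xz q_xz r
  have h₁₂' := add_ne_zero_of_mul_pos h₁₂
  have h₁₄' := add_ne_zero_of_mul_pos h₁₄
  have h₂₃' := add_ne_zero_of_mul_pos (mul_pos_of_mul_pos_of_mul_pos h₁₂ h₁₃)
  have h₃₄' := add_ne_zero_of_mul_pos (mul_pos_of_mul_pos_of_mul_pos h₁₃ h₁₄)
  have hk₄ : k₄ ≠ 0 := right_ne_zero_of_mul h₁₄.ne'
  have hr : Continuous r := by fun_prop
  have hr_zero : r 0 = p_xz := by simp [r, p_xz]
  have hr_end : r (k₄ / (k₃ + k₄)) = q_py := by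
    simp only [r, q_py, Prod.mk.injEq, and_true]
    constructor
    · field_simp
    · field_simp; ring
  have hx_py : k₂ / (k₁ + k₂) = k₃ / (k₃ + k₄) := div_add_eq_div_add_of_mul_eq h₁₂' h₃₄' hS
  have hz_py : k₁ / (k₁ + k₂) = k₄ / (k₃ + k₄) := by
    rw [add_comm k₁, add_comm k₃] at *
    exact div_add_eq_div_add_of_mul_eq h₁₂' h₃₄' hS.symm
  have hy_xz : k₄ / (k₁ + k₄) = k₃ / (k₂ + k₃) := by
    rw [add_comm k₂] at *
    exact div_add_eq_div_add_of_mul_eq h₁₄' h₂₃' (hS.trans (mul_comm _ _))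
  refine ⟨?_, ?_, ?_, ?_⟩
  · simp only [p_py, q_py, hx_py, hz_py]
  · simp only [p_xz, q_xz, hy_xz]
  · exact hr_zero ▸ (hr.tendsto 0).mono_left nhdsWithin_le_nhds
  · exact hr_end ▸ (hr.tendsto _).mono_left nhdsWithin_le_nhds
end

section
/- Assume k₄ ≠ 0 and k₃/k₄ > 0. For each C with 0 < C < C* := (k₄/(k₄+k₃))(k₃/(k₄+k₃))^{k₃/k₄}, the level surface {(x,y,z) : x > 0, x^{k₃}z^{k₄} = C^{k₄}, (x,y,z) in the open simplex} is the graph of the function z = C x^{−k₃/k₄} over a subset of the (x,y)-face, and it separates the open simplex into exactly two nonempty connected open components. -/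
/-!
Taking `k₄`-th roots turns the level equation into `z = g x`, where
`g x = C * x ^ (-(k₃ / k₄))` is a positive, continuous and convex function on `(0, ∞)`.
The region below the graph is the image of the simplex under the map rescaling each vertical
fibre `0 < z < 1 - x - y` linearly onto `0 < z < min (1 - x - y) (g x)`, hence connected.
The region above the graph is convex because `g` is. It is nonempty because `C < C*` makes the
graph dip below the face `x + z = 1`.
-/

open Set Real

theorem isOpen_openSimplex : IsOpen openSimplex :=
  (isOpen_lt continuous_const continuous_fst).inter <|
    (isOpen_lt continuous_const continuous_snd.fst).inter <|
      (isOpen_lt continuous_const continuous_snd.snd).inter <|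
        isOpen_lt ((continuous_fst.add continuous_snd.fst).add continuous_snd.snd) continuous_const

theorem convex_openSimplex : Convex ℝ openSimplex := by
  rintro p ⟨hx, hy, hz, hs⟩ p' ⟨hx', hy', hz', hs'⟩ a b ha hb hab
  have hsum := convex_Iio (1 : ℝ) hs hs' ha hb hab
  simp only [mem_Iio, smul_eq_mul] at hsum
  refine ⟨convex_Ioi (0 : ℝ) hx hx' ha hb hab, convex_Ioi (0 : ℝ) hy hy' ha hb hab,
    convex_Ioi (0 : ℝ) hz hz' ha hb hab, ?_⟩
  simp only [Prod.fst_add, Prod.snd_add, Prod.smul_fst, Prod.smul_snd, smul_eq_mul]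
  linarith

theorem isConnected_openSimplex : IsConnected openSimplex :=
  convex_openSimplex.isConnected ⟨(1/4, 1/4, 1/4), by norm_num [openSimplex]⟩

/-- `x ^ p = (exp p) ^ (log x)` is a convex antitone function of the concave `log x`. -/
theorem convexOn_rpow_of_nonpos {p : ℝ} (hp : p ≤ 0) :
    ConvexOn ℝ (Ioi 0) fun x : ℝ ↦ x ^ p := by
  have hanti : AntitoneOn (fun t ↦ exp p ^ t) (log '' Ioi 0) := fun s _ t _ hst ↦
    rpow_le_rpow_of_exponent_ge (exp_pos p) (exp_le_one_iff.2 hp) hst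
  refine (((convexOn_rpow_left (exp_pos p)).subset (subset_univ _) ?_).comp_concaveOn
    strictConcaveOn_log_Ioi.concaveOn hanti).congr fun x hx ↦ ?_
  · have himage : log '' Ioi 0 = univ :=
      eq_univ_of_forall fun y ↦ ⟨exp y, exp_pos y, log_exp y⟩
    exact himage ▸ convex_univ
  · simp [rpow_def_of_pos hx, rpow_def_of_pos (exp_pos p), mul_comm]

theorem rpow_mul_rpow_eq_rpow_iff {x z C a b : ℝ} (hx : 0 < x) (hz : 0 ≤ z) (hC : 0 ≤ C)
    (hb : b ≠ 0) : x ^ a * z ^ b = C ^ b ↔ z = C * x ^ (-(a / b)) := by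
  have hrhs : (C * x ^ (-(a / b))) ^ b = C ^ b / x ^ a := by
    rw [mul_rpow hC (rpow_nonneg hx.le _), ← rpow_mul hx.le, neg_mul, div_mul_cancel₀ a hb,
      rpow_neg hx.le, div_eq_mul_inv]
  rw [← (rpow_left_injOn hb).eq_iff hz (mul_nonneg hC (rpow_nonneg hx.le _)), hrhs,
    eq_div_iff (rpow_pos_of_pos hx a).ne', mul_comm]

section Graph

variable {f : ℝ → ℝ}

def simplexBelow (f : ℝ → ℝ) : Set (ℝ × ℝ × ℝ) := openSimplex ∩ {p | p.2.2 < f p.1}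

def simplexAbove (f : ℝ → ℝ) : Set (ℝ × ℝ × ℝ) := openSimplex ∩ {p | f p.1 < p.2.2}

theorem disjoint_simplexBelow_simplexAbove : Disjoint (simplexBelow f) (simplexAbove f) :=
  disjoint_left.2 fun _ hb ha ↦ hb.2.asymm (mem_ofPred_eq ▸ ha.2)

theorem simplexBelow_union_simplexAbove :
    simplexBelow f ∪ simplexAbove f = openSimplex \ {p | p.2.2 = f p.1} := by
  ext p
  simp only [simplexBelow, simplexAbove, mem_union, mem_inter_iff, mem_sdiff, mem_ofPred_eq,
    ← and_or_left, lt_or_lt_iff_ne]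

theorem continuousOn_graphCoords (hf : ContinuousOn f (Ioi 0)) :
    ContinuousOn (fun p : ℝ × ℝ × ℝ ↦ (p.2.2, f p.1)) openSimplex :=
  continuous_snd.snd.continuousOn.prodMk <|
    hf.comp continuous_fst.continuousOn fun _ hp ↦ hp.1

theorem isOpen_simplexBelow (hf : ContinuousOn f (Ioi 0)) : IsOpen (simplexBelow f) :=
  (continuousOn_graphCoords hf).isOpen_inter_preimage isOpen_openSimplex
    (isOpen_lt continuous_fst continuous_snd)

theorem isOpen_simplexAbove (hf : ContinuousOn f (Ioi 0)) : IsOpen (simplexAbove f) :=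
  (continuousOn_graphCoords hf).isOpen_inter_preimage isOpen_openSimplex
    (isOpen_lt continuous_snd continuous_fst)

noncomputable def squashBelow (f : ℝ → ℝ) (p : ℝ × ℝ × ℝ) : ℝ × ℝ × ℝ :=
  (p.1, p.2.1, p.2.2 * min 1 (f p.1 / (1 - p.1 - p.2.1)))

theorem continuousOn_squashBelow (hf : ContinuousOn f (Ioi 0)) :
    ContinuousOn (squashBelow f) openSimplex := by
  have hfx : ContinuousOn (fun p : ℝ × ℝ × ℝ ↦ f p.1) openSimplex :=
    hf.comp continuous_fst.continuousOn fun _ hp ↦ hp.1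
  refine continuous_fst.continuousOn.prodMk <| continuous_snd.fst.continuousOn.prodMk <|
    continuous_snd.snd.continuousOn.mul <| ContinuousOn.inf continuousOn_const <|
      hfx.div (by fun_prop) fun p hp ↦ ?_
  obtain ⟨-, -, hz, hs⟩ := hp
  linarith

theorem mul_min_one_div_self {r : ℝ} (c : ℝ) (hr : 0 < r) : r * min 1 (c / r) = min r c := by
  rw [mul_min_of_nonneg _ _ hr.le, mul_one, mul_div_cancel₀ _ hr.ne']

theorem image_squashBelow_openSimplex (hf : ∀ x, 0 < x → 0 < f x) :
    squashBelow f '' openSimplex = simplexBelow f := by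
  have hscale : ∀ x y, 0 < x → x + y < 1 → 0 < min 1 (f x / (1 - x - y)) := fun x y hx hxy ↦
    lt_min one_pos (div_pos (hf x hx) (by linarith))
  refine SurjOn.image_eq_of_mapsTo ?_ ?_
  · rintro ⟨x, y, w⟩ ⟨⟨hx, hy, hw, hs⟩, hwf⟩
    have hm := hscale x y hx (by linarith)
    have hlt : w < (1 - x - y) * min 1 (f x / (1 - x - y)) := by
      rw [mul_min_one_div_self _ (by linarith)]
      exact lt_min (by linarith) hwf
    refine ⟨(x, y, w / min 1 (f x / (1 - x - y))), ⟨hx, hy, div_pos hw hm, ?_⟩, ?_⟩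
    · have := (div_lt_iff₀ hm).2 hlt
      dsimp only
      linarith
    · simp [squashBelow, div_mul_cancel₀ w hm.ne']
  · rintro ⟨x, y, z⟩ ⟨hx, hy, hz, hs⟩
    have hm := hscale x y hx (by linarith)
    have hlt : z * min 1 (f x / (1 - x - y)) < min (1 - x - y) (f x) := by
      rw [← mul_min_one_div_self (f x) (by linarith : 0 < 1 - x - y)]
      exact mul_lt_mul_of_pos_right (by linarith) hm
    obtain ⟨hlt_face, hlt_graph⟩ := lt_min_iff.1 hlt
    refine ⟨⟨hx, hy, mul_pos hz hm, ?_⟩, hlt_graph⟩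
    dsimp only [squashBelow]
    linarith

theorem isConnected_simplexBelow (hf : ContinuousOn f (Ioi 0)) (hpos : ∀ x, 0 < x → 0 < f x) :
    IsConnected (simplexBelow f) :=
  image_squashBelow_openSimplex hpos ▸
    isConnected_openSimplex.image _ (continuousOn_squashBelow hf)

theorem convex_simplexAbove (hf : ConvexOn ℝ (Ioi 0) f) : Convex ℝ (simplexAbove f) := by
  let L : ℝ × ℝ × ℝ →ₗ[ℝ] ℝ × ℝ := (LinearMap.fst ℝ ℝ (ℝ × ℝ)).prod
    ((LinearMap.snd ℝ ℝ ℝ).comp (LinearMap.snd ℝ ℝ (ℝ × ℝ)))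
  have hL : simplexAbove f = openSimplex ∩ L ⁻¹' {q | q.1 ∈ Ioi 0 ∧ f q.1 < q.2} := by
    ext p
    simp only [simplexAbove, mem_inter_iff, mem_preimage, mem_ofPred_eq, mem_Ioi]
    exact ⟨fun h ↦ ⟨h.1, h.1.1, h.2⟩, fun h ↦ ⟨h.1, h.2.2⟩⟩
  rw [hL]
  exact convex_openSimplex.inter (hf.convex_strict_epigraph.linear_preimage L)

theorem simplexAbove_nonempty {x : ℝ} (hx : 0 < x) (hfx : 0 < f x) (hlt : x + f x < 1) :
    (simplexAbove f).Nonempty := by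
  refine ⟨(x, (1 - x - f x) / 3, f x + (1 - x - f x) / 3), ⟨hx, ?_, ?_, ?_⟩,
    show f x < _ from ?_⟩ <;> linarith

end Graph

/-- The bound on `C` is the maximum of `(1 - x) * x ^ (a / b)`, attained at `x = a / (b + a)`. -/
theorem exists_pos_add_mul_rpow_neg_lt_one {a b C : ℝ} (hb : b ≠ 0) (hab : 0 < a / b)
    (hC : C < b / (b + a) * (a / (b + a)) ^ (a / b)) :
    ∃ x, 0 < x ∧ x + C * x ^ (-(a / b)) < 1 := by
  have hba : b + a ≠ 0 := by
    have : b + a = b * (1 + a / b) := by field_simp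
    rw [this]
    exact mul_ne_zero hb (by positivity)
  have hx : 0 < a / (b + a) := by
    have : a / (b + a) = a / b / (1 + a / b) := by field_simp
    rw [this]
    positivity
  have hcompl : 1 - a / (b + a) = b / (b + a) := by
    field_simp
    ring
  refine ⟨a / (b + a), hx, ?_⟩
  suffices C * (a / (b + a)) ^ (-(a / b)) < 1 - a / (b + a) by linarith
  rwa [rpow_neg hx.le, ← div_eq_mul_inv, div_lt_iff₀ (rpow_pos_of_pos hx _), hcompl]

/-- For `k₄ ≠ 0`, `k₃/k₄ > 0` and `0 < C < C*`, the level surface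
`{x^{k₃} z^{k₄} = C^{k₄}}` within the open simplex is the graph
`z = C x^{−k₃/k₄}`, and it separates the open simplex into exactly two nonempty
connected open components. -/
theorem stmt19 (k₃ k₄ : ℝ) (hk₄ : k₄ ≠ 0) (h : 0 < k₃ / k₄)
    (C : ℝ) (hC : 0 < C)
    (hCs : C < k₄ / (k₄ + k₃) * (k₃ / (k₄ + k₃)) ^ (k₃ / k₄)) :
    (∀ p ∈ openSimplex,
      p.1 ^ k₃ * p.2.2 ^ k₄ = C ^ k₄ ↔ p.2.2 = C * p.1 ^ (-(k₃ / k₄))) ∧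
    ∃ A B : Set (ℝ × ℝ × ℝ),
      IsOpen A ∧ IsOpen B ∧ A.Nonempty ∧ B.Nonempty ∧
      IsConnected A ∧ IsConnected B ∧ Disjoint A B ∧
      A ∪ B = openSimplex \ {p | p.2.2 = C * p.1 ^ (-(k₃ / k₄))} := by
  set g : ℝ → ℝ := fun x ↦ C * x ^ (-(k₃ / k₄))
  have hg_cont : ContinuousOn g (Ioi 0) := fun x hx ↦
    (continuousAt_const.mul (continuousAt_rpow_const x _ (Or.inl hx.ne'))).continuousWithinAt
  have hg_pos : ∀ x, 0 < x → 0 < g x := fun x hx ↦ by positivity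
  have hg_convex : ConvexOn ℝ (Ioi 0) g := by
    simpa only [smul_eq_mul] using (convexOn_rpow_of_nonpos (neg_nonpos.2 h.le)).smul hC.le
  obtain ⟨x, hx, hxg⟩ := exists_pos_add_mul_rpow_neg_lt_one hk₄ h hCs
  have hB : (simplexAbove g).Nonempty := simplexAbove_nonempty hx (hg_pos x hx) hxg
  refine ⟨fun p hp ↦ rpow_mul_rpow_eq_rpow_iff hp.1 hp.2.2.1.le hC.le hk₄, simplexBelow g,
    simplexAbove g, isOpen_simplexBelow hg_cont, isOpen_simplexAbove hg_cont,
    (isConnected_simplexBelow hg_cont hg_pos).nonempty, hB, isConnected_simplexBelow hg_cont hg_pos,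
    (convex_simplexAbove hg_convex).isConnected hB, disjoint_simplexBelow_simplexAbove,
    simplexBelow_union_simplexAbove⟩
end
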